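/- Let β, α, μ₂, d₂ > 0, θ ∈ ℝ, c ∈ ℝ. Suppose S, I : ℝ → ℝ with I differentiable, I(ξ) ≥ 0 for all ξ, S(ξ) ≥ 0 for all ξ, and I satisfies cI'(ξ) = d₂𝔍[I](ξ) + βS(ξ)I(ξ)/(1 + αI(ξ)) − μ₂I(ξ) for all ξ ∈ ℝ. If I(ξ₀) = 0 for some ξ₀ ∈ ℝ, then I'(ξ₀) = 0 and I(ξ₀ + sin θ) = I(ξ₀ − sin θ) = I(ξ₀ + cos θ) = I(ξ₀ − cos θ) = 0. -/

import Mathlib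

/-- Discrete Laplacian in direction `θ`. -/
noncomputable def lap (θ : ℝ) (φ : ℝ → ℝ) (ξ : ℝ) : ℝ :=
  φ (ξ + Real.sin θ) + φ (ξ - Real.sin θ) + φ (ξ + Real.cos θ) + φ (ξ - Real.cos θ) - 4 * φ ξ

/-- At a zero of a nonnegative function, `lap` is a sum of four nonnegative terms. -/
theorem neighbours_eq_zero_of_lap_eq_zero {θ ξ : ℝ} {φ : ℝ → ℝ} (hφ : ∀ x, 0 ≤ φ x)
    (hξ : φ ξ = 0) (hlap : lap θ φ ξ = 0) :
    φ (ξ + Real.sin θ) = 0 ∧ φ (ξ - Real.sin θ) = 0 ∧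
      φ (ξ + Real.cos θ) = 0 ∧ φ (ξ - Real.cos θ) = 0 := by
  rw [lap, hξ] at hlap
  have h₁ := hφ (ξ + Real.sin θ)
  have h₂ := hφ (ξ - Real.sin θ)
  have h₃ := hφ (ξ + Real.cos θ)
  have h₄ := hφ (ξ - Real.cos θ)
  refine ⟨?_, ?_, ?_, ?_⟩ <;> linarith

theorem stmt_12_general (β α μ₂ d₂ θ c : ℝ)
    (hd₂ : 0 < d₂)
    (S I : ℝ → ℝ)
    (hIpos : ∀ ξ : ℝ, 0 ≤ I ξ)
    (hIeq : ∀ ξ : ℝ, c * deriv I ξ =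
      d₂ * lap θ I ξ + β * S ξ * I ξ / (1 + α * I ξ) - μ₂ * I ξ)
    (ξ₀ : ℝ) (hξ₀ : I ξ₀ = 0) :
    deriv I ξ₀ = 0 ∧ I (ξ₀ + Real.sin θ) = 0 ∧ I (ξ₀ - Real.sin θ) = 0 ∧
      I (ξ₀ + Real.cos θ) = 0 ∧ I (ξ₀ - Real.cos θ) = 0 := by
  have hmin : IsLocalMin I ξ₀ := Filter.Eventually.of_forall fun x => hξ₀ ▸ hIpos x
  have hderiv : deriv I ξ₀ = 0 := hmin.deriv_eq_zero
  have hlap : lap θ I ξ₀ = 0 := by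
    have h := hIeq ξ₀
    simp only [hderiv, hξ₀, mul_zero, zero_div, add_zero, sub_zero] at h
    exact (mul_eq_zero.mp h.symm).resolve_left hd₂.ne'
  exact ⟨hderiv, neighbours_eq_zero_of_lap_eq_zero hIpos hξ₀ hlap⟩

theorem stmt_12 (β α μ₂ d₂ θ c : ℝ)
    (hβ : 0 < β) (hα : 0 < α) (hμ₂ : 0 < μ₂) (hd₂ : 0 < d₂)
    (S I : ℝ → ℝ) (hIdiff : Differentiable ℝ I)
    (hIpos : ∀ ξ : ℝ, 0 ≤ I ξ) (hSpos : ∀ ξ : ℝ, 0 ≤ S ξ)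
    (hIeq : ∀ ξ : ℝ, c * deriv I ξ =
      d₂ * lap θ I ξ + β * S ξ * I ξ / (1 + α * I ξ) - μ₂ * I ξ)
    (ξ₀ : ℝ) (hξ₀ : I ξ₀ = 0) :
    deriv I ξ₀ = 0 ∧ I (ξ₀ + Real.sin θ) = 0 ∧ I (ξ₀ - Real.sin θ) = 0 ∧
      I (ξ₀ + Real.cos θ) = 0 ∧ I (ξ₀ - Real.cos θ) = 0 :=
  stmt_12_general β α μ₂ d₂ θ c hd₂ S I hIpos hIeq ξ₀ hξ₀
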